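/- arXiv:1603.06272 — 7 statements merged into one kernel-verified Lean document; each statement's English description precedes it below -/
import Mathlib

section
/- Let Γ = ⟨g₁,…,g_N⟩ be a discrete group with its dual embedded in U_N⁺ via the diagonal representation u = diag(g₁,…,g_N), and let Q ∈ U_N be a unitary matrix. Then the relations v_{ij} = 0 for all i ≠ j, where v = QuQ*, are equivalent to the relations: g_i = g_j whenever there exists k with Q_{ki} ≠ 0 and Q_{kj} ≠ 0. Hence Γ_Q = Γ / ⟨g_i = g_j | ∃k, Q_{ki} ≠ 0 and Q_{kj} ≠ 0⟩. -/
/-!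
The coefficient of `h ∈ Γ` in `v = Q u Q*` is the scalar matrix `Q P_h Q*`, where `P_h` is the
diagonal projection onto the fibre `g⁻¹(h)`, so `v` is diagonal iff every `Q P_h Q*` is. Since
`Q* Q = 1` these matrices are mutually orthogonal, and the `k`-th diagonal entry of `Q P_h Q*` is
`∑_{g m = h} |Q_{km}|²`, nonzero exactly when row `k` of `Q` meets the fibre over `h`. If all of
them are diagonal, a row meeting two fibres would make a diagonal entry of a vanishing product
nonzero. Conversely, if each row of `Q` is supported in a single fibre, an off-diagonal entry of
`Q P_h Q*` is either `(Q Q*)_{ab} = 0` or an empty sum.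
-/

open Matrix MonoidAlgebra

section FiberProjection

variable {n Γ R : Type*} [Fintype n] [DecidableEq n] [DecidableEq Γ]

variable (R) in
def fiberProj [Zero R] [One R] (g : n → Γ) (h : Γ) : Matrix n n R :=
  diagonal fun m => if g m = h then 1 else 0

section Semiring

variable [Semiring R]

lemma fiberProj_mul_fiberProj_of_ne (g : n → Γ) {h h' : Γ} (hne : h ≠ h') :
    fiberProj R g h * fiberProj R g h' = 0 := by
  unfold fiberProj
  rw [diagonal_mul_diagonal, ← diagonal_zero]
  congr 1
  ext m
  split_ifs with h₁ h₂ <;> simp_all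

variable [StarRing R]

lemma mul_fiberProj_mul_conjTranspose_apply (Q : Matrix n n R) (g : n → Γ) (h : Γ) (a b : n) :
    (Q * fiberProj R g h * Qᴴ) a b = ∑ m, if g m = h then Q a m * star (Q b m) else 0 := by
  rw [Matrix.mul_apply]
  refine Finset.sum_congr rfl fun m _ => ?_
  rw [fiberProj, mul_diagonal]
  split_ifs <;> simp

lemma isDiag_mul_fiberProj_mul_conjTranspose {Q : Matrix n n R} (hQ : Q * Qᴴ = 1) {g : n → Γ}
    (hrows : ∀ k i j, Q k i ≠ 0 → Q k j ≠ 0 → g i = g j) (h : Γ) :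
    (Q * fiberProj R g h * Qᴴ).IsDiag := by
  intro a b hab
  rw [mul_fiberProj_mul_conjTranspose_apply]
  by_cases hrow : ∃ m₀, g m₀ = h ∧ Q a m₀ ≠ 0
  · obtain ⟨m₀, rfl, hm₀⟩ := hrow
    have hsupp : ∀ m, g m ≠ g m₀ → Q a m = 0 := fun m hm =>
      of_not_not fun ham => hm (hrows a m m₀ ham hm₀)
    calc (∑ m, if g m = g m₀ then Q a m * star (Q b m) else 0)
        = ∑ m, Q a m * star (Q b m) :=
          Finset.sum_congr rfl fun m _ => by split_ifs with hm <;> simp [hsupp m, *]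
      _ = (Q * Qᴴ) a b := by simp [Matrix.mul_apply]
      _ = 0 := by rw [hQ, one_apply_ne hab]
  · push Not at hrow
    exact Finset.sum_eq_zero fun m _ => by split_ifs with hm <;> simp [hrow m, *]

end Semiring

section StarOrderedRing

variable [Ring R] [PartialOrder R] [StarRing R] [StarOrderedRing R] [NoZeroDivisors R]

lemma mul_fiberProj_mul_conjTranspose_apply_self_eq_zero_iff (Q : Matrix n n R) (g : n → Γ)
    (h : Γ) (k : n) : (Q * fiberProj R g h * Qᴴ) k k = 0 ↔ ∀ m, g m = h → Q k m = 0 := by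
  have hdot : (Q * fiberProj R g h * Qᴴ) k k =
      (fun m => if g m = h then Q k m else 0) ⬝ᵥ star (fun m => if g m = h then Q k m else 0) := by
    rw [mul_fiberProj_mul_conjTranspose_apply, dotProduct]
    exact Finset.sum_congr rfl fun m _ => by by_cases hm : g m = h <;> simp [hm]
  rw [hdot, dotProduct_self_star_eq_zero, funext_iff]
  exact forall_congr' fun m => by by_cases hm : g m = h <;> simp [hm]

lemma eq_of_forall_isDiag_mul_fiberProj_mul_conjTranspose {Q : Matrix n n R} (hQ : Qᴴ * Q = 1)
    {g : n → Γ} (hdiag : ∀ h, (Q * fiberProj R g h * Qᴴ).IsDiag) {k i j : n}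
    (hki : Q k i ≠ 0) (hkj : Q k j ≠ 0) : g i = g j := by
  by_contra hne
  have horth : (Q * fiberProj R g (g i) * Qᴴ) * (Q * fiberProj R g (g j) * Qᴴ) = 0 := by
    calc _ = Q * (fiberProj R g (g i) * (Qᴴ * Q) * fiberProj R g (g j)) * Qᴴ := by
          simp only [Matrix.mul_assoc]
      _ = 0 := by rw [hQ, Matrix.mul_one, fiberProj_mul_fiberProj_of_ne g hne]; simp
  have hkk := congrFun (congrFun horth k) k
  rw [← (hdiag (g i)).diagonal_diag, diagonal_mul, diag_apply, Matrix.zero_apply] at hkk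
  rcases mul_eq_zero.1 hkk with hi | hj
  · exact hki ((mul_fiberProj_mul_conjTranspose_apply_self_eq_zero_iff Q g _ k).1 hi i rfl)
  · exact hkj ((mul_fiberProj_mul_conjTranspose_apply_self_eq_zero_iff Q g _ k).1 hj j rfl)

end StarOrderedRing

lemma forall_isDiag_mul_fiberProj_mul_conjTranspose_iff [CommRing R] [PartialOrder R] [StarRing R]
    [StarOrderedRing R] [NoZeroDivisors R] {Q : Matrix n n R} (hQ : Q ∈ unitaryGroup n R) (g : n → Γ) :
    (∀ h, (Q * fiberProj R g h * Qᴴ).IsDiag) ↔ ∀ k i j, Q k i ≠ 0 → Q k j ≠ 0 → g i = g j :=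
  ⟨fun hdiag _ _ _ => eq_of_forall_isDiag_mul_fiberProj_mul_conjTranspose hQ.1 hdiag,
    isDiag_mul_fiberProj_mul_conjTranspose hQ.2⟩

section MonoidAlgebra

variable [CommSemiring R] [StarRing R] [Monoid Γ]

lemma coeff_map_mul_diagonal_of_mul_map_apply (Q : Matrix n n R) (g : n → Γ) (a b : n) (h : Γ) :
    ((Q.map (algebraMap R R[Γ]) * diagonal (fun i => of R Γ (g i)) *
      Qᴴ.map (algebraMap R R[Γ])) a b).coeff h = (Q * fiberProj R g h * Qᴴ) a b := by
  rw [mul_fiberProj_mul_conjTranspose_apply, Matrix.mul_apply, coeff_sum,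
    Finsupp.finsetSum_apply]
  refine Finset.sum_congr rfl fun m _ => ?_
  simp only [mul_diagonal, map_apply, MonoidAlgebra.coe_algebraMap, Function.comp_apply,
    Algebra.algebraMap_self, RingHom.id_apply, MonoidAlgebra.of_apply, single_mul_single, mul_one,
    one_mul, coeff_single, Finsupp.single_apply, conjTranspose_apply]

lemma isDiag_map_mul_diagonal_of_mul_map_iff (Q : Matrix n n R) (g : n → Γ) :
    (Q.map (algebraMap R R[Γ]) * diagonal (fun i => of R Γ (g i)) *
      Qᴴ.map (algebraMap R R[Γ])).IsDiag ↔ ∀ h, (Q * fiberProj R g h * Qᴴ).IsDiag := by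
  simp only [IsDiag, ← coeff_inj, Finsupp.ext_iff, coeff_map_mul_diagonal_of_mul_map_apply,
    coeff_zero, Finsupp.coe_zero, Pi.zero_apply]
  exact ⟨fun H h a b hab => H hab h, fun H a b hab h => H h hab⟩

end MonoidAlgebra

end FiberProjection

/-- For a discrete group `Γ` generated by `g 1, …, g N`, embedded diagonally
via `u = diag(g₁,…,g_N)` over the group algebra, and `Q ∈ U_N`, the relations
`(QuQ*)_{ij} = 0` for `i ≠ j` hold iff `g i = g j` whenever some row `k` of `Q` has
`Q k i ≠ 0` and `Q k j ≠ 0`. -/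
theorem stmt0 {N : ℕ} (Γ : Type*) [Group Γ] (g : Fin N → Γ)
    (Q : Matrix (Fin N) (Fin N) ℂ) (hQ : Q ∈ Matrix.unitaryGroup (Fin N) ℂ)
    (ι : Matrix (Fin N) (Fin N) ℂ → Matrix (Fin N) (Fin N) (MonoidAlgebra ℂ Γ))
    (hι : ι = fun M => M.map (algebraMap ℂ (MonoidAlgebra ℂ Γ)))
    (u v : Matrix (Fin N) (Fin N) (MonoidAlgebra ℂ Γ))
    (hu : u = Matrix.diagonal fun i => MonoidAlgebra.of ℂ Γ (g i))
    (hv : v = ι Q * u * ι Qᴴ) :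
    (∀ i j, i ≠ j → v i j = 0) ↔
      (∀ k i j, Q k i ≠ 0 → Q k j ≠ 0 → g i = g j) := by
  classical
  subst hv hι hu
  open scoped ComplexOrder in
  exact (isDiag_map_mul_diagonal_of_mul_map_iff Q g).trans
    (forall_isDiag_mul_fiberProj_mul_conjTranspose_iff hQ g)
end

section
/- Let Q ∈ U_N be a unitary matrix and let g₁,…,g_N be elements of a group G. For the diagonal matrix w = diag(g₁,…,g_N) viewed inside the group algebra, the condition that QwQ* has vanishing off-diagonal entries implies: for all i, k with Q_{ki} ≠ 0, the element g_i equals the diagonal entry (QwQ*)_{kk}; consequently Q_{ki} ≠ 0 and Q_{kj} ≠ 0 imply g_i = g_j. -/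
/-! Unitarity of `Q` turns `v = Q w Q*` into `v Q = Q w`. Both `v` and `w` are diagonal, so the
`(k, i)` entry reads `v k k * Q k i = Q k i * g i`; the scalar `Q k i` is central and, being
nonzero, cancels in the torsion-free `ℂ`-module `ℂ[G]`. -/

open Matrix MonoidAlgebra

namespace Matrix

variable {n R A : Type*} [Fintype n] [DecidableEq n]

theorem map_mul_conjTranspose_mul_map_of_mem_unitaryGroup [CommRing R] [StarRing R] [Semiring A]
    [Algebra R A] {Q : Matrix n n R} (hQ : Q ∈ unitaryGroup n R) (w : Matrix n n A) :
    Q.map (algebraMap R A) * w * Qᴴ.map (algebraMap R A) * Q.map (algebraMap R A) =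
      Q.map (algebraMap R A) * w := by
  rw [mul_assoc, ← Matrix.map_mul, ← star_eq_conjTranspose, mem_unitaryGroup_iff'.mp hQ,
    Matrix.map_one _ (map_zero _) (map_one _), mul_one]

theorem eq_of_diagonal_mul_map_eq_map_mul_diagonal [CommSemiring R] [IsCancelMulZero R]
    [Semiring A] [Algebra R A] [Module.IsTorsionFree R A] {e d : n → A} {Q : Matrix n n R}
    (h : diagonal e * Q.map (algebraMap R A) = Q.map (algebraMap R A) * diagonal d) {k i : n}
    (hki : Q k i ≠ 0) : e k = d i := by
  have hki_entry := congrFun₂ h k i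
  simp only [diagonal_mul, mul_diagonal, map_apply] at hki_entry
  rw [← Algebra.commutes, ← Algebra.smul_def, ← Algebra.smul_def] at hki_entry
  exact smul_right_injective A hki hki_entry

end Matrix

/-- If `w = diag(g₁,…,g_N)` over the group algebra and `Q` is unitary with
`QwQ*` having vanishing off-diagonal entries, then for all `i, k` with `Q k i ≠ 0` the
element `g i` equals the diagonal entry `(QwQ*)_{kk}` (as elements of the group algebra);
consequently `Q k i ≠ 0` and `Q k j ≠ 0` imply `g i = g j`. -/
theorem stmt1 {N : ℕ} (G : Type*) [Group G] (g : Fin N → G)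
    (Q : Matrix (Fin N) (Fin N) ℂ) (hQ : Q ∈ Matrix.unitaryGroup (Fin N) ℂ)
    (ι : Matrix (Fin N) (Fin N) ℂ → Matrix (Fin N) (Fin N) (MonoidAlgebra ℂ G))
    (hι : ι = fun M => M.map (algebraMap ℂ (MonoidAlgebra ℂ G)))
    (w v : Matrix (Fin N) (Fin N) (MonoidAlgebra ℂ G))
    (hw : w = Matrix.diagonal fun i => MonoidAlgebra.of ℂ G (g i))
    (hv : v = ι Q * w * ι Qᴴ)
    (hoff : ∀ i j, i ≠ j → v i j = 0) :
    (∀ i k, Q k i ≠ 0 → v k k = MonoidAlgebra.of ℂ G (g i)) ∧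
      (∀ i j k, Q k i ≠ 0 → Q k j ≠ 0 → g i = g j) := by
  subst hι hw
  have hv_diagonal : diagonal v.diag = v := IsDiag.diagonal_diag hoff
  have hv_intertwines : diagonal v.diag * Q.map (algebraMap ℂ (MonoidAlgebra ℂ G)) =
      Q.map (algebraMap ℂ _) * diagonal fun i => MonoidAlgebra.of ℂ G (g i) := by
    rw [hv_diagonal, hv, map_mul_conjTranspose_mul_map_of_mem_unitaryGroup hQ]
  have hv_diag : ∀ i k, Q k i ≠ 0 → v k k = MonoidAlgebra.of ℂ G (g i) := fun i k hki =>
    eq_of_diagonal_mul_map_eq_map_mul_diagonal hv_intertwines hki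
  exact ⟨hv_diag, fun i j k hki hkj =>
    MonoidAlgebra.of_injective ((hv_diag i k hki).symm.trans (hv_diag j k hkj))⟩
end

section
/- In the group algebra of the infinite dihedral group D_∞ = ℤ₂ * ℤ₂ with generators g, h, the element ρ = 2 + g + h generates a polynomial algebra: the powers ρ⁰, ρ¹, ρ², … are linearly independent over ℂ. -/
/-! For `u ≠ 0`, the weight `r k ↦ u ^ (2k)`, `sr k ↦ u ^ (1 - 2k)` on `D_∞` extends linearly to a
functional `φ` on `ℂ[D_∞]` with `φ 1 = 1` and `φ (a * ρ) = (2 + u + u⁻¹) * φ a` for all `a`, so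
`φ (p(ρ)) = p(2 + u + u⁻¹)` for every polynomial `p`. Since every complex number has the form
`2 + u + u⁻¹`, a polynomial annihilating `ρ` vanishes identically: `ρ` is transcendental over `ℂ`,
hence its powers are linearly independent. -/

open MonoidAlgebra Polynomial DihedralGroup

theorem Transcendental.linearIndependent_pow {R A : Type*} [CommRing R] [Ring A] [Algebra R A]
    {x : A} (hx : Transcendental R x) : LinearIndependent R (x ^ · : ℕ → A) := by
  have := (basisMonomials R).linearIndependent.map' (Polynomial.aeval x).toLinearMap
    (LinearMap.ker_eq_bot.mpr (transcendental_iff_injective.mp hx))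
  simpa [Function.comp_def] using this

section Eigenfunctional

variable {R A : Type*} [CommSemiring R] [Semiring A] [Algebra R A] {x : A} {μ : R}

theorem LinearMap.map_mul_pow_of_map_mul_eq (φ : A →ₗ[R] R) (hφ : ∀ a, φ (a * x) = μ * φ a)
    (a : A) (n : ℕ) : φ (a * x ^ n) = μ ^ n * φ a := by
  induction n with
  | zero => simp
  | succ n ih => rw [pow_succ, ← mul_assoc, hφ, ih, pow_succ', mul_assoc]

theorem LinearMap.map_aeval_of_map_mul_eq (φ : A →ₗ[R] R) (hφ : ∀ a, φ (a * x) = μ * φ a)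
    (p : R[X]) : φ (aeval x p) = p.eval μ * φ 1 := by
  induction p using Polynomial.induction_on' with
  | add p q hp hq => simp only [map_add, hp, hq, eval_add, add_mul]
  | monomial n c =>
    rw [aeval_monomial, Algebra.algebraMap_eq_smul_one, smul_mul_assoc, map_smul,
      φ.map_mul_pow_of_map_mul_eq hφ, eval_monomial, smul_eq_mul, mul_assoc]

end Eigenfunctional

theorem transcendental_of_infinite_setOf_map_mul_eq {R A : Type*} [CommRing R] [IsDomain R]
    [Ring A] [Algebra R A] {x : A}
    (h : {μ : R | ∃ φ : A →ₗ[R] R, φ 1 ≠ 0 ∧ ∀ a, φ (a * x) = μ * φ a}.Infinite) :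
    Transcendental R x := by
  refine transcendental_iff.mpr fun p hp ↦ eq_zero_of_infinite_isRoot p (h.mono ?_)
  rintro μ ⟨φ, hφ1, hφ⟩
  have := φ.map_aeval_of_map_mul_eq hφ p
  rw [hp, map_zero, eq_comm, mul_eq_zero] at this
  exact this.resolve_right hφ1

namespace MonoidAlgebra

variable {R G : Type*} [CommSemiring R] [Monoid G]

theorem map_mul_eq_of_forall_map_of_mul_eq {y : R[G]} {μ : R} (φ : R[G] →ₗ[R] R)
    (hφ : ∀ g, φ (of R G g * y) = μ * φ (of R G g)) (a : R[G]) : φ (a * y) = μ * φ a := by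
  induction a using MonoidAlgebra.induction_on with
  | of g => exact hφ g
  | add a b ha hb => rw [add_mul, map_add, map_add, ha, hb, mul_add]
  | smul c a ha =>
    rw [smul_mul_assoc, map_smul, map_smul, ha, smul_eq_mul, smul_eq_mul, mul_left_comm]

variable (R) in
noncomputable def linearCombination (f : G → R) : R[G] →ₗ[R] R :=
  Finsupp.linearCombination R f ∘ₗ (coeffLinearEquiv R).toLinearMap

@[simp]
theorem linearCombination_of (f : G → R) (g : G) : linearCombination R f (of R G g) = f g := by
  simp [linearCombination]

theorem linearCombination_of_mul_of (f : G → R) (g g' : G) :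
    linearCombination R f (of R G g * of R G g') = f (g * g') := by
  rw [← map_mul, linearCombination_of]

end MonoidAlgebra

noncomputable def dihedralWeight (u : ℂ) : DihedralGroup 0 → ℂ
  | r k => u ^ (2 * k.cast : ℤ)
  | sr k => u ^ (1 - 2 * k.cast : ℤ)

theorem dihedralWeight_one (u : ℂ) : dihedralWeight u 1 = 1 := by
  simp [← r_zero, dihedralWeight]

theorem dihedralWeight_mul_sr_zero_add_mul_sr_one {u : ℂ} (hu : u ≠ 0) (x : DihedralGroup 0) :
    2 * dihedralWeight u x + dihedralWeight u (x * sr 0) + dihedralWeight u (x * sr 1) =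
      (2 + u + u⁻¹) * dihedralWeight u x := by
  rcases x with k | k <;>
  simp only [dihedralWeight, r_mul_sr, sr_mul_sr, ZMod.cast_sub (dvd_refl 0), ZMod.cast_zero,
    ZMod.cast_one'] <;>
  simp only [zpow_sub₀ hu, zpow_add₀ hu, zpow_mul, zpow_neg, mul_sub, mul_one, zpow_ofNat,
    zero_sub, mul_neg, sub_neg_eq_add]
  · field_simp
  · field_simp
    ring

theorem exists_ne_zero_eq_two_add_add_inv (μ : ℂ) : ∃ u : ℂ, u ≠ 0 ∧ 2 + u + u⁻¹ = μ := by
  obtain ⟨u, hu⟩ := exists_quadratic_eq_zero (one_ne_zero' ℂ)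
    (IsAlgClosed.exists_eq_mul_self (discrim 1 (2 - μ) 1))
  have hu0 : u ≠ 0 := by rintro rfl; simp at hu
  refine ⟨u, hu0, ?_⟩
  field_simp
  linear_combination hu

theorem transcendental_two_add_of_sr_zero_add_of_sr_one :
    Transcendental ℂ (2 + of ℂ (DihedralGroup 0) (sr 0) + of ℂ (DihedralGroup 0) (sr 1)) := by
  refine transcendental_of_infinite_setOf_map_mul_eq
    (Set.infinite_univ.mono fun μ _ ↦ ?_)
  obtain ⟨u, hu, rfl⟩ := exists_ne_zero_eq_two_add_add_inv μ
  refine ⟨linearCombination ℂ (dihedralWeight u), ?_, map_mul_eq_of_forall_map_of_mul_eq _ ?_⟩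
  · rw [← (of ℂ (DihedralGroup 0)).map_one, linearCombination_of, dihedralWeight_one]
    exact one_ne_zero
  · intro x
    rw [mul_add, mul_add, mul_two, map_add, map_add, map_add, linearCombination_of_mul_of,
      linearCombination_of_mul_of, linearCombination_of, ← two_mul,
      dihedralWeight_mul_sr_zero_add_mul_sr_one hu]

/-- In the group algebra of the infinite dihedral group
`D_∞ = ℤ₂ * ℤ₂ = DihedralGroup 0`, with order-two generators `g = sr 0`, `h = sr 1`,
the element `ρ = 2 + g + h` generates a polynomial algebra: its powers
`ρ⁰, ρ¹, ρ², …` are linearly independent over `ℂ`. -/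
theorem stmt7 (g h : DihedralGroup 0)
    (hg : g = DihedralGroup.sr 0) (hh : h = DihedralGroup.sr 1)
    (ρ : MonoidAlgebra ℂ (DihedralGroup 0))
    (hρ : ρ = 2 + MonoidAlgebra.of ℂ (DihedralGroup 0) g
        + MonoidAlgebra.of ℂ (DihedralGroup 0) h) :
    LinearIndependent ℂ (fun n : ℕ => ρ ^ n) := by
  subst hg hh hρ
  exact transcendental_two_add_of_sr_zero_add_of_sr_one.linearIndependent_pow
end

section
/- In the group algebra of the free group F_N (N ≥ 2) with generators g₁,…,g_N, the element ρ = g₁ + ⋯ + g_N generates a *-polynomial algebra: the set of all words in ρ and ρ* = g₁⁻¹ + ⋯ + g_N⁻¹ are linearly independent over ℂ. -/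
/-!
Expanding a word `w` in `ρ` and `ρ*` gives a sum of group elements of norm at most `|w|`; a
reduced word of length exactly `|w|` occurs in it only if its exponent signs spell `w`, and then
it occurs exactly once. With at least two generators every sign pattern is spelled by some
reduced word, so a vanishing linear combination, read off at the reduced word spelling a longest
word with nonzero coefficient, shows that this coefficient is zero.
-/

open MonoidAlgebra

theorem linearIndependent_of_triangular {ι R M β : Type*} [Ring R] [AddCommGroup M]
    [Module R M] [LinearOrder β] (v : ι → M) (deg : ι → β) (φ : ι → M →ₗ[R] R)
    (h_diag : ∀ i, φ i (v i) = 1) (h_lower : ∀ i j, deg j ≤ deg i → j ≠ i → φ i (v j) = 0) :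
    LinearIndependent R v := by
  classical
  rw [linearIndependent_iff']
  intro s c hsum i₀ hi₀
  by_contra hc
  obtain ⟨i, hi, hmax⟩ := (s.filter (c · ≠ 0)).exists_max_image deg ⟨i₀, by simp [hi₀, hc]⟩
  rw [Finset.mem_filter] at hi
  have hφ : ∑ j ∈ s, c j * φ i (v j) = 0 := by simpa using congrArg (φ i) hsum
  rw [Finset.sum_eq_single i, h_diag, mul_one] at hφ
  · exact hi.2 hφ
  · intro j hj hji
    by_cases hcj : c j = 0
    · rw [hcj, zero_mul]
    · rw [h_lower i j (hmax j (by simp [hj, hcj])) hji, mul_zero]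
  · exact fun h => (h hi.1).elim

namespace FreeGroup

variable {α : Type*}

theorem mk_singleton_not_eq_inv (a : α) (b : Bool) : mk [(a, !b)] = (mk [(a, b)])⁻¹ := by
  simp [inv_mk, invRev]

variable [DecidableEq α]

theorem toWord_mk_of_isReduced {L : List (α × Bool)} (h : IsReduced L) : (mk L).toWord = L := by
  rw [toWord_mk, h.reduce_eq]

theorem toWord_mk_singleton_mul {c : α × Bool} {x : FreeGroup α} (h : IsReduced (c :: x.toWord)) :
    (mk [c] * x).toWord = c :: x.toWord := by
  conv_lhs => rw [← mk_toWord (x := x), mul_mk]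
  exact toWord_mk_of_isReduced h

theorem exists_map_snd_toWord_eq [Nontrivial α] (w : List Bool) :
    ∃ x : FreeGroup α, x.toWord.map Prod.snd = w := by
  induction w with
  | nil => exact ⟨1, rfl⟩
  | cons b l ih =>
    obtain ⟨x, hx⟩ := ih
    obtain ⟨a, ha⟩ : ∃ a : α, ∀ d ∈ x.toWord.head?, a ≠ d.1 := by
      cases x.toWord.head? with
      | none => exact ⟨Classical.arbitrary α, by simp⟩
      | some d => simpa using exists_ne d.1
    refine ⟨mk [(a, b)] * x, ?_⟩
    rw [toWord_mk_singleton_mul, List.map_cons, hx]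
    cases hw : x.toWord with
    | nil => exact IsReduced.singleton
    | cons d t =>
      rw [isReduced_cons_cons]
      exact ⟨fun h => absurd h (ha d (by simp [hw])), hw ▸ isReduced_toWord⟩

end FreeGroup

open FreeGroup

section GeneratorWords

variable (k α : Type*) [Semiring k] [Fintype α]

/-- `generatorSum k α true = ∑ i, of i` and `generatorSum k α false = ∑ i, (of i)⁻¹`. -/
noncomputable def generatorSum (b : Bool) : MonoidAlgebra k (FreeGroup α) :=
  ∑ i, single (mk [(i, b)]) 1

noncomputable def generatorWord (w : List Bool) : MonoidAlgebra k (FreeGroup α) :=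
  (w.map (generatorSum k α)).prod

variable {k α}

theorem coeff_generatorWord_cons (b : Bool) (l : List Bool) (x : FreeGroup α) :
    (generatorWord k α (b :: l)).coeff x =
      ∑ i, (generatorWord k α l).coeff (mk [(i, !b)] * x) := by
  simp [generatorWord, generatorSum, Finset.sum_mul, coeff_single_mul_apply, inv_mk, invRev]

variable [DecidableEq α]

theorem norm_le_length_of_coeff_generatorWord_ne_zero {w : List Bool} {x : FreeGroup α}
    (hx : (generatorWord k α w).coeff x ≠ 0) : x.norm ≤ w.length := by
  induction w generalizing x with
  | nil =>
    have : x = 1 := by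
      by_contra h
      exact hx (by simp [generatorWord, one_def, Ne.symm h])
    simp [this]
  | cons b l ih =>
    rw [coeff_generatorWord_cons] at hx
    obtain ⟨i, -, hi⟩ := Finset.exists_ne_zero_of_sum_ne_zero hx
    calc x.norm = (mk [(i, b)] * (mk [(i, !b)] * x)).norm := by
          rw [mk_singleton_not_eq_inv, mul_inv_cancel_left]
      _ ≤ (mk [(i, b)]).norm + (mk [(i, !b)] * x).norm := norm_mul_le _ _
      _ ≤ 1 + l.length := add_le_add norm_mk_le (ih hi)
      _ = (b :: l).length := by simp [add_comm]

theorem coeff_generatorWord_eq_zero_of_length_lt_norm {w : List Bool} {x : FreeGroup α}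
    (hx : w.length < x.norm) : (generatorWord k α w).coeff x = 0 := by
  by_contra h
  exact (norm_le_length_of_coeff_generatorWord_ne_zero h).not_gt hx

theorem coeff_generatorWord_of_norm_eq {w : List Bool} {x : FreeGroup α} (hx : x.norm = w.length) :
    (generatorWord k α w).coeff x = if x.toWord.map Prod.snd = w then 1 else 0 := by
  induction w generalizing x with
  | nil =>
    obtain rfl : x = 1 := norm_eq_zero.1 hx
    simp [generatorWord]
  | cons b l ih =>
    obtain ⟨⟨a, b'⟩, t, hxt⟩ := List.exists_cons_of_length_eq_add_one hx
    have ht : (mk t).toWord = t :=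
      toWord_mk_of_isReduced (isReduced_toWord.infix (hxt ▸ List.suffix_cons _ _).isInfix)
    have hx_eq : x = mk [(a, b')] * mk t := by rw [mul_mk, List.singleton_append, ← hxt, mk_toWord]
    have ht_len : t.length = l.length := by simpa [FreeGroup.norm, hxt] using hx
    have h_off : ∀ i, ¬(i = a ∧ b' = b) → (generatorWord k α l).coeff (mk [(i, !b)] * x) = 0 := by
      intro i hi
      have hred : IsReduced ((i, !b) :: x.toWord) := by
        rw [hxt, isReduced_cons_cons, ← hxt]
        exact ⟨fun hia => (Bool.eq_not.2 fun hb => hi ⟨hia, hb⟩).symm, isReduced_toWord⟩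
      apply coeff_generatorWord_eq_zero_of_length_lt_norm
      simp [FreeGroup.norm, toWord_mk_singleton_mul hred, hxt, ht_len]
    rw [coeff_generatorWord_cons, hxt]
    by_cases hb : b' = b
    · subst hb
      rw [Finset.sum_eq_single a (fun i _ hi => h_off i (fun h => hi h.1)) (by simp),
        mk_singleton_not_eq_inv, hx_eq, inv_mul_cancel_left,
        ih (by rw [FreeGroup.norm, ht, ht_len])]
      simp [ht]
    · rw [Finset.sum_eq_zero (fun i _ => h_off i (fun h => hb h.2))]
      simp [hb]

theorem linearIndependent_generatorWord (k α : Type*) [Ring k] [Fintype α] [DecidableEq α]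
    [Nontrivial α] : LinearIndependent k (generatorWord k α) := by
  choose x hx using exists_map_snd_toWord_eq (α := α)
  have hx_norm (w : List Bool) : (x w).norm = w.length := by
    rw [FreeGroup.norm, ← List.length_map Prod.snd, hx]
  refine linearIndependent_of_triangular _ List.length
    (fun w => Finsupp.lapply (x w) ∘ₗ (coeffLinearEquiv k).toLinearMap) (fun w => ?_) ?_
  · simp [coeff_generatorWord_of_norm_eq (hx_norm w), hx]
  · intro w v hvw hne
    by_cases h : (generatorWord k α v).coeff (x w) = 0
    · simpa using h
    · have hlen := (hx_norm w).symm.trans_le (norm_le_length_of_coeff_generatorWord_ne_zero h)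
      simp [coeff_generatorWord_of_norm_eq ((hx_norm w).trans (hvw.antisymm hlen).symm), hx,
        Ne.symm hne]

end GeneratorWords

/-- In the group algebra of the free group `F_N` (`N ≥ 2`) with generators
`g i`, the element `ρ = Σ g i` generates a `*`-polynomial algebra: the words in `ρ` and
`ρ* = Σ (g i)⁻¹` (finite products of these two elements, indexed by lists of booleans)
are linearly independent over `ℂ`. -/
theorem stmt9 {N : ℕ} (hN : 2 ≤ N)
    (ρ ρstar : MonoidAlgebra ℂ (FreeGroup (Fin N)))
    (hρ : ρ = ∑ i, MonoidAlgebra.of ℂ (FreeGroup (Fin N)) (FreeGroup.of i))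
    (hρstar : ρstar = ∑ i, MonoidAlgebra.of ℂ (FreeGroup (Fin N)) (FreeGroup.of i)⁻¹) :
    LinearIndependent ℂ
      (fun w : List Bool => (w.map (fun b => if b then ρ else ρstar)).prod) := by
  have : Nontrivial (Fin N) := Fin.nontrivial_iff_two_le.2 hN
  have hletter : (fun b => if b then ρ else ρstar) = generatorSum ℂ (Fin N) := by
    funext b
    cases b <;> simp [hρ, hρstar, generatorSum, of_apply, FreeGroup.of, inv_mk, invRev]
  rw [hletter]
  exact linearIndependent_generatorWord ℂ (Fin N)
end

section
/- Let Q ∈ U_N, g₁,…,g_N elements of a group, v = diag(g₁,…,g_N), and u = QvQ*. For a linear map T : (ℂ^N)^{⊗k} → (ℂ^N)^{⊗l}, the relation T ∈ Hom(u^{⊗k}, u^{⊗l}) (i.e., T u^{⊗k} = u^{⊗l} T over the group algebra) is equivalent to T^Q ∈ Hom(v^{⊗k}, v^{⊗l}), where T^Q = (Q*)^{⊗l} T Q^{⊗k}, which in turn is equivalent to: (T^Q)_{j₁…j_l, i₁…i_k} ≠ 0 implies g_{i₁}⋯g_{i_k} = g_{j₁}⋯g_{j_l}. -/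
open Matrix MonoidAlgebra

/-- Entrywise tensor power of a square matrix: the matrix indexed by multi-indices, with
entry `M_{i₁j₁} ⋯ M_{i_k j_k}` (ordered product). -/
def tensorPow {N : ℕ} {A : Type*} [Monoid A] [AddCommMonoid A] [Mul A]
    (M : Matrix (Fin N) (Fin N) A) (k : ℕ) :
    Matrix (Fin k → Fin N) (Fin k → Fin N) A :=
  fun i j => (List.ofFn fun a => M (i a) (j a)).prod

/-! The entries of `Q^{⊗m}` are scalars, hence central in `ℂ[G]`, so the tensor power is
multiplicative on `u = QvQ*`: `u^{⊗m} = Q^{⊗m} v^{⊗m} (Q*)^{⊗m}` with `Q^{⊗m}` unitary,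
and conjugating the intertwining relation gives the first equivalence. The matrix `v^{⊗m}` is
diagonal with entries `g_{i₁}⋯g_{i_m}`, and for a scalar `c` the relation
`c · g = g' · c` in `ℂ[G]` holds iff `c = 0` or `g = g'`; comparing entries gives the second. -/

theorem List.prod_ofFn_sum {R ι : Type*} [Fintype ι] [NonAssocSemiring R] :
    ∀ {m : ℕ} (f : Fin m → ι → R),
      (List.ofFn fun a => ∑ p : ι, f a p).prod
        = ∑ p : Fin m → ι, (List.ofFn fun a => f a (p a)).prod
  | 0, _ => by simp
  | m + 1, f => by
    rw [List.ofFn_succ, List.prod_cons, List.prod_ofFn_sum, Finset.sum_mul_sum,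
      ← (Fin.consEquiv fun _ => ι).sum_comp, Fintype.sum_prod_type]
    simp [Fin.consEquiv, List.ofFn_succ]

theorem List.prod_ofFn_mul_of_commute {M : Type*} [Monoid M] :
    ∀ {m : ℕ} (x y : Fin m → M), (∀ a b, Commute (y a) (x b)) →
      (List.ofFn fun a => x a * y a).prod = (List.ofFn x).prod * (List.ofFn y).prod
  | 0, _, _, _ => by simp
  | m + 1, x, y, h => by
    have hy : Commute (y 0) (List.ofFn fun a : Fin m => x a.succ).prod :=
      Commute.list_prod_right _ _ fun z hz => by
        obtain ⟨b, rfl⟩ := List.mem_ofFn.mp hz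
        exact h 0 b.succ
    simp only [List.ofFn_succ, List.prod_cons,
      List.prod_ofFn_mul_of_commute _ _ fun a b => h a.succ b.succ]
    rw [mul_assoc, ← mul_assoc (y 0), hy.eq]
    simp only [mul_assoc]

section TensorPow

variable {N : ℕ}

theorem tensorPow_mul_of_commute {R : Type*} [Semiring R] (A B : Matrix (Fin N) (Fin N) R)
    (h : ∀ i j i' j', Commute (B i j) (A i' j')) (m : ℕ) :
    tensorPow (A * B) m = tensorPow A m * tensorPow B m := by
  ext i j
  simp only [tensorPow, Matrix.mul_apply, List.prod_ofFn_sum]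
  exact Finset.sum_congr rfl fun p _ =>
    List.prod_ofFn_mul_of_commute _ _ fun a b => h _ _ _ _

theorem tensorPow_diagonal {R : Type*} [Semiring R] (d : Fin N → R) (m : ℕ) :
    tensorPow (diagonal d) m
      = diagonal fun i : Fin m → Fin N => (List.ofFn fun a => d (i a)).prod := by
  ext i j
  by_cases hij : i = j
  · subst hij
    simp [tensorPow]
  · obtain ⟨a, ha⟩ : ∃ a, i a ≠ j a := Function.ne_iff.mp hij
    rw [diagonal_apply_ne _ hij, tensorPow, List.prod_eq_zero]
    exact List.mem_ofFn.mpr ⟨a, diagonal_apply_ne _ ha⟩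

theorem tensorPow_one {R : Type*} [Semiring R] (m : ℕ) :
    tensorPow (1 : Matrix (Fin N) (Fin N) R) m = 1 := by
  rw [← diagonal_one, tensorPow_diagonal]
  simp

theorem tensorPow_map {R S : Type*} [Semiring R] [Semiring S]
    (f : R →+* S) (M : Matrix (Fin N) (Fin N) R) (m : ℕ) :
    tensorPow (M.map f) m = (tensorPow M m).map f := by
  ext i j
  simp only [tensorPow, map_apply, map_list_prod, List.map_ofFn, Function.comp_def]

variable {R A : Type*} [CommSemiring R] [Semiring A] [Algebra R A]

theorem tensorPow_map_algebraMap_mul_of_mul_eq_one {P P' : Matrix (Fin N) (Fin N) R}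
    (hP : P * P' = 1) (m : ℕ) :
    tensorPow (P.map (algebraMap R A)) m * tensorPow (P'.map (algebraMap R A)) m = 1 := by
  rw [← tensorPow_mul_of_commute (P.map (algebraMap R A)) (P'.map (algebraMap R A))
      fun _ _ _ _ => Algebra.commutes _ _,
    ← Matrix.map_mul, hP, Matrix.map_one _ (map_zero _) (map_one _), tensorPow_one]

theorem tensorPow_map_algebraMap_conj (P P' : Matrix (Fin N) (Fin N) R)
    (D : Matrix (Fin N) (Fin N) A) (m : ℕ) :
    tensorPow (P.map (algebraMap R A) * D * P'.map (algebraMap R A)) m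
      = (tensorPow P m).map (algebraMap R A) * tensorPow D m
        * (tensorPow P' m).map (algebraMap R A) := by
  rw [tensorPow_mul_of_commute _ (P'.map (algebraMap R A)) fun _ _ _ _ => Algebra.commutes _ _,
    tensorPow_mul_of_commute (P.map (algebraMap R A)) D fun _ _ _ _ => (Algebra.commutes _ _).symm,
    tensorPow_map, tensorPow_map]

end TensorPow

theorem Matrix.mul_conj_eq_conj_mul_iff {α β R : Type*} [Fintype α] [Fintype β]
    [DecidableEq α] [DecidableEq β] [Semiring R]
    {p p' : Matrix α α R} {q q' : Matrix β β R}
    (hpp' : p * p' = 1) (hp'p : p' * p = 1) (hqq' : q * q' = 1) (hq'q : q' * q = 1)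
    (t : Matrix β α R) (d : Matrix α α R) (e : Matrix β β R) :
    t * (p * d * p') = q * e * q' * t ↔ q' * t * p * d = e * (q' * t * p) := by
  constructor
  · intro h
    calc q' * t * p * d = q' * (t * (p * d * p')) * p := by
          simp only [Matrix.mul_assoc, hp'p, Matrix.mul_one]
      _ = q' * (q * e * q' * t) * p := by rw [h]
      _ = e * (q' * t * p) := by
          simp only [← Matrix.mul_assoc, hq'q, Matrix.one_mul]
  · intro h
    calc t * (p * d * p') = q * (q' * t * p * d) * p' := by
          simp only [← Matrix.mul_assoc, hqq', Matrix.one_mul]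
      _ = q * (e * (q' * t * p)) * p' := by rw [h]
      _ = q * e * q' * t := by
          simp only [Matrix.mul_assoc, hpp', Matrix.mul_one]

namespace MonoidAlgebra

variable {k G : Type*} [CommSemiring k] [Monoid G]

theorem algebraMap_mul_of_eq_of_mul_algebraMap_iff (c : k) (h h' : G) :
    algebraMap k (MonoidAlgebra k G) c * of k G h = of k G h' * algebraMap k (MonoidAlgebra k G) c
      ↔ (c ≠ 0 → h = h') := by
  simp only [coe_algebraMap, Function.comp_apply, Algebra.algebraMap_self, RingHom.id_apply,
    of_apply, single_mul_single, one_mul, mul_one, single_inj]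
  by_cases hc : c = 0 <;> simp [hc]

theorem map_algebraMap_mul_diagonal_of_eq_iff {α β : Type*} [Fintype α] [Fintype β]
    [DecidableEq α] [DecidableEq β] (t : Matrix β α k) (a : α → G) (b : β → G) :
    t.map (algebraMap k (MonoidAlgebra k G)) * diagonal (fun i => of k G (a i))
        = diagonal (fun j => of k G (b j)) * t.map (algebraMap k (MonoidAlgebra k G))
      ↔ ∀ i j, t j i ≠ 0 → a i = b j := by
  simp only [← Matrix.ext_iff, mul_diagonal, diagonal_mul, map_apply,
    algebraMap_mul_of_eq_of_mul_algebraMap_iff]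
  exact forall_comm

theorem tensorPow_diagonal_of {N : ℕ} (g : Fin N → G) (m : ℕ) :
    tensorPow (diagonal fun i => of k G (g i)) m
      = diagonal fun i : Fin m → Fin N => of k G (List.ofFn fun a => g (i a)).prod := by
  rw [tensorPow_diagonal]
  congr 1
  ext i : 1
  rw [map_list_prod, List.map_ofFn]
  rfl

end MonoidAlgebra

theorem stmt11_general {N : ℕ} (G : Type*) [Group G] (g : Fin N → G) (k l : ℕ)
    (Q : Matrix (Fin N) (Fin N) ℂ) (hQ : Q ∈ Matrix.unitaryGroup (Fin N) ℂ)
    (v u : Matrix (Fin N) (Fin N) (MonoidAlgebra ℂ G))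
    (hv : v = Matrix.diagonal fun i => MonoidAlgebra.of ℂ G (g i))
    (hu : u = Q.map (algebraMap ℂ (MonoidAlgebra ℂ G)) * v *
      Qᴴ.map (algebraMap ℂ (MonoidAlgebra ℂ G)))
    (T : Matrix (Fin l → Fin N) (Fin k → Fin N) ℂ)
    (TQ : Matrix (Fin l → Fin N) (Fin k → Fin N) ℂ)
    (hTQ : TQ = tensorPow Qᴴ l * T * tensorPow Q k) :
    ((T.map (algebraMap ℂ (MonoidAlgebra ℂ G)) * tensorPow u k =
        tensorPow u l * T.map (algebraMap ℂ (MonoidAlgebra ℂ G))) ↔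
      (TQ.map (algebraMap ℂ (MonoidAlgebra ℂ G)) * tensorPow v k =
        tensorPow v l * TQ.map (algebraMap ℂ (MonoidAlgebra ℂ G)))) ∧
    ((T.map (algebraMap ℂ (MonoidAlgebra ℂ G)) * tensorPow u k =
        tensorPow u l * T.map (algebraMap ℂ (MonoidAlgebra ℂ G))) ↔
      (∀ (i : Fin k → Fin N) (j : Fin l → Fin N), TQ j i ≠ 0 →
        (List.ofFn fun a => g (i a)).prod = (List.ofFn fun b => g (j b)).prod)) := by
  have hQQ : Q * Qᴴ = 1 := Matrix.mem_unitaryGroup_iff.mp hQ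
  have hQQ' : Qᴴ * Q = 1 := Matrix.mem_unitaryGroup_iff'.mp hQ
  have hconj : T.map (algebraMap ℂ (MonoidAlgebra ℂ G)) * tensorPow u k =
        tensorPow u l * T.map (algebraMap ℂ (MonoidAlgebra ℂ G)) ↔
      TQ.map (algebraMap ℂ (MonoidAlgebra ℂ G)) * tensorPow v k =
        tensorPow v l * TQ.map (algebraMap ℂ (MonoidAlgebra ℂ G)) := by
    rw [hu, tensorPow_map_algebraMap_conj, tensorPow_map_algebraMap_conj, hTQ, Matrix.map_mul,
      Matrix.map_mul, ← tensorPow_map, ← tensorPow_map, ← tensorPow_map, ← tensorPow_map]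
    exact Matrix.mul_conj_eq_conj_mul_iff
      (tensorPow_map_algebraMap_mul_of_mul_eq_one hQQ k)
      (tensorPow_map_algebraMap_mul_of_mul_eq_one hQQ' k)
      (tensorPow_map_algebraMap_mul_of_mul_eq_one hQQ l)
      (tensorPow_map_algebraMap_mul_of_mul_eq_one hQQ' l) _ _ _
  refine ⟨hconj, hconj.trans ?_⟩
  rw [hv, MonoidAlgebra.tensorPow_diagonal_of, MonoidAlgebra.tensorPow_diagonal_of]
  exact MonoidAlgebra.map_algebraMap_mul_diagonal_of_eq_iff _ _ _

/-- With `v = diag(g₁,…,g_N)` over the group algebra, `Q ∈ U_N` and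
`u = QvQ*`, a complex linear map `T` satisfies `T ∈ Hom(u^{⊗k}, u^{⊗l})` iff
`T^Q = (Q*)^{⊗l} T Q^{⊗k}` satisfies `T^Q ∈ Hom(v^{⊗k}, v^{⊗l})`, iff
`(T^Q)_{j,i} ≠ 0` implies `g_{i₁}⋯g_{i_k} = g_{j₁}⋯g_{j_l}`. -/
theorem stmt11 {N : ℕ} (G : Type*) [Group G] (g : Fin N → G) (k l : ℕ)
    (Q : Matrix (Fin N) (Fin N) ℂ) (hQ : Q ∈ Matrix.unitaryGroup (Fin N) ℂ)
    (ι : ∀ {m : ℕ}, Matrix (Fin m → Fin N) (Fin m → Fin N) ℂ →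
      Matrix (Fin m → Fin N) (Fin m → Fin N) (MonoidAlgebra ℂ G))
    (hι : ∀ {m : ℕ} (M : Matrix (Fin m → Fin N) (Fin m → Fin N) ℂ),
      ι M = M.map (algebraMap ℂ (MonoidAlgebra ℂ G)))
    (v u : Matrix (Fin N) (Fin N) (MonoidAlgebra ℂ G))
    (hv : v = Matrix.diagonal fun i => MonoidAlgebra.of ℂ G (g i))
    (hu : u = Q.map (algebraMap ℂ (MonoidAlgebra ℂ G)) * v *
      Qᴴ.map (algebraMap ℂ (MonoidAlgebra ℂ G)))
    (T : Matrix (Fin l → Fin N) (Fin k → Fin N) ℂ)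
    (TQ : Matrix (Fin l → Fin N) (Fin k → Fin N) ℂ)
    (hTQ : TQ = tensorPow Qᴴ l * T * tensorPow Q k) :
    ((T.map (algebraMap ℂ (MonoidAlgebra ℂ G)) * tensorPow u k =
        tensorPow u l * T.map (algebraMap ℂ (MonoidAlgebra ℂ G))) ↔
      (TQ.map (algebraMap ℂ (MonoidAlgebra ℂ G)) * tensorPow v k =
        tensorPow v l * TQ.map (algebraMap ℂ (MonoidAlgebra ℂ G)))) ∧
    ((T.map (algebraMap ℂ (MonoidAlgebra ℂ G)) * tensorPow u k =
        tensorPow u l * T.map (algebraMap ℂ (MonoidAlgebra ℂ G))) ↔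
      (∀ (i : Fin k → Fin N) (j : Fin l → Fin N), TQ j i ≠ 0 →
        (List.ofFn fun a => g (i a)).prod = (List.ofFn fun b => g (j b)).prod)) :=
  stmt11_general G g k l Q hQ v u hv hu T TQ hTQ
end

section
/- Let H ⊆ U_N be a closed subgroup stable under entrywise complex conjugation, and let [H] be the compact matrix quantum group with C([H]) ⊆ M₂(C(H)) generated by the matrices u_{ij} = [[0, v_{ij}],[v̄_{ij}, 0]], where v_{ij} are the coordinate functions on H. Then each u_{ij} is self-adjoint, the u_{ij} satisfy the half-commutation relations abc = cba for a,b,c ∈ {u_{ij}}, and the matrix u = (u_{ij}) is orthogonal (u u^t = u^t u = 1). -/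
/-!
Write `M(a, b) = !![0, a; b, 0]`. Then `M(a, b) * M(c, d) = diag(a d, b c)`, so over a
commutative ring a product of three such matrices is off-diagonal with corner entries
`a d e` and `b c f`, which are symmetric in the outer factors: this is half-commutation.
For orthogonality, `Σ_m M(a_m, b_m) * M(c_m, d_m)` is diagonal with entries `Σ a_m d_m` and
`Σ b_m c_m`; for `u i j = M(v i j, star (v i j))` these are entries of `V * star V` (of `Vᵀ`
for the columns), and the matrix `V = (v i j)` over `C(H, ℂ)` is unitary because it is so
pointwise.
-/

open Matrix

section Antidiagonal

theorem star_antidiag_star_self {A : Type*} [AddMonoid A] [StarAddMonoid A] (a : A) :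
    star !![0, a; star a, 0] = !![0, a; star a, 0] := by
  ext i j
  fin_cases i <;> fin_cases j <;> simp

variable {A : Type*} [CommSemiring A]

theorem antidiag_mul_antidiag_mul_antidiag_comm (a b c d e f : A) :
    !![0, a; b, 0] * !![0, c; d, 0] * !![0, e; f, 0] =
      !![0, e; f, 0] * !![0, c; d, 0] * !![0, a; b, 0] := by
  simp only [mul_fin_two, mul_zero, zero_mul, add_zero, zero_add]
  ring_nf

theorem sum_antidiag_mul_antidiag {ι : Type*} (s : Finset ι) (a b c d : ι → A) :
    ∑ m ∈ s, !![0, a m; b m, 0] * !![0, c m; d m, 0] =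
      !![∑ m ∈ s, a m * d m, 0; 0, ∑ m ∈ s, b m * c m] := by
  ext i j
  fin_cases i <;> fin_cases j <;> simp [Matrix.sum_apply]

end Antidiagonal

theorem sum_antidiag_mul_antidiag_of_mem_unitaryGroup {n A : Type*} [Fintype n] [DecidableEq n]
    [CommRing A] [StarRing A] {W : Matrix n n A} (hW : W ∈ unitaryGroup n A) (i j : n) :
    ∑ m, !![0, W i m; star (W i m), 0] * !![0, W j m; star (W j m), 0] =
      if i = j then 1 else 0 := by
  have hWWstar := congrFun₂ (mem_unitaryGroup_iff.mp hW)
  have hij : ∑ m, W i m * star (W j m) = if i = j then 1 else 0 := by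
    simpa [Matrix.mul_apply, one_apply] using hWWstar i j
  have hji : ∑ m, star (W i m) * W j m = if i = j then 1 else 0 := by
    simpa [Matrix.mul_apply, one_apply, mul_comm, eq_comm] using hWWstar j i
  rw [sum_antidiag_mul_antidiag, hij, hji]
  split_ifs
  · exact one_fin_two.symm
  · exact etaExpand_eq (0 : Matrix (Fin 2) (Fin 2) A)

theorem ContinuousMap.mem_unitaryGroup_of_forall_map_eval {X n R : Type*} [TopologicalSpace X]
    [Fintype n] [DecidableEq n] [CommRing R] [StarRing R] [TopologicalSpace R]
    [IsTopologicalRing R] [ContinuousStar R] {V : Matrix n n C(X, R)}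
    (hV : ∀ x, V.map (fun f => f x) ∈ unitaryGroup n R) : V ∈ unitaryGroup n C(X, R) := by
  rw [mem_unitaryGroup_iff]
  ext i j x
  have hx := congrFun₂ (mem_unitaryGroup_iff.mp (hV x)) i j
  rw [Matrix.mul_apply, Matrix.one_apply] at hx ⊢
  simpa [apply_ite (fun f : C(X, R) => f x)] using hx

theorem stmt14_general {N : ℕ} (H : Subgroup (Matrix.unitaryGroup (Fin N) ℂ))
    (v : Fin N → Fin N → C(H, ℂ))
    (hv : ∀ i j (h : H), v i j h =
      ((h : Matrix.unitaryGroup (Fin N) ℂ) : Matrix (Fin N) (Fin N) ℂ) i j)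
    (u : Fin N → Fin N → Matrix (Fin 2) (Fin 2) C(H, ℂ))
    (hu : ∀ i j, u i j = !![0, v i j; star (v i j), 0]) :
    (∀ i j, star (u i j) = u i j) ∧
    (∀ i₁ j₁ i₂ j₂ i₃ j₃,
      u i₁ j₁ * u i₂ j₂ * u i₃ j₃ = u i₃ j₃ * u i₂ j₂ * u i₁ j₁) ∧
    (∀ i j, (∑ m, u i m * u j m) = if i = j then 1 else 0) ∧
    (∀ i j, (∑ m, u m i * u m j) = if i = j then 1 else 0) := by
  have hV : Matrix.of v ∈ unitaryGroup (Fin N) C(H, ℂ) :=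
    ContinuousMap.mem_unitaryGroup_of_forall_map_eval fun h => by
      convert (h : unitaryGroup (Fin N) ℂ).prop
      ext i j
      exact hv i j h
  refine ⟨fun i j => ?_, fun i₁ j₁ i₂ j₂ i₃ j₃ => ?_, fun i j => ?_, fun i j => ?_⟩
  · rw [hu]
    exact star_antidiag_star_self _
  · simp only [hu]
    exact antidiag_mul_antidiag_mul_antidiag_comm _ _ _ _ _ _
  · simp only [hu]
    exact sum_antidiag_mul_antidiag_of_mem_unitaryGroup hV i j
  · simp only [hu]
    exact sum_antidiag_mul_antidiag_of_mem_unitaryGroup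
      (transpose_mem_unitaryGroup_iff.mpr hV) i j

/-- Let `H ⊆ U_N` be a closed subgroup stable under entrywise complex
conjugation, with coordinate functions `v i j ∈ C(H)`, and in `M₂(C(H))` set
`u i j = [[0, v i j], [conj (v i j), 0]]`. Then each `u i j` is self-adjoint, the `u i j`
satisfy the half-commutation relations `a b c = c b a`, and the matrix `u = (u i j)` is
orthogonal: `Σ_k u i k * u j k = δ_{ij} = Σ_k u k i * u k j`. -/
theorem stmt14 {N : ℕ} (H : Subgroup (Matrix.unitaryGroup (Fin N) ℂ))
    (hHclosed : IsClosed (H : Set (Matrix.unitaryGroup (Fin N) ℂ)))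
    (hHconj : ∀ h : H, ∃ h' : H,
      ((h' : Matrix.unitaryGroup (Fin N) ℂ) : Matrix (Fin N) (Fin N) ℂ) =
        (((h : Matrix.unitaryGroup (Fin N) ℂ) : Matrix (Fin N) (Fin N) ℂ)).map
          (starRingEnd ℂ))
    (v : Fin N → Fin N → C(H, ℂ))
    (hv : ∀ i j (h : H), v i j h =
      ((h : Matrix.unitaryGroup (Fin N) ℂ) : Matrix (Fin N) (Fin N) ℂ) i j)
    (u : Fin N → Fin N → Matrix (Fin 2) (Fin 2) C(H, ℂ))
    (hu : ∀ i j, u i j = !![0, v i j; star (v i j), 0]) :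
    (∀ i j, star (u i j) = u i j) ∧
    (∀ i₁ j₁ i₂ j₂ i₃ j₃,
      u i₁ j₁ * u i₂ j₂ * u i₃ j₃ = u i₃ j₃ * u i₂ j₂ * u i₁ j₁) ∧
    (∀ i j, (∑ m, u i m * u j m) = if i = j then 1 else 0) ∧
    (∀ i j, (∑ m, u m i * u m j) = if i = j then 1 else 0) :=
  stmt14_general H v hv u hu
end

section
/- For the Fourier matrix Q = F_N = (ξ^{jk}/√N)_{j,k=0}^{N-1} with ξ = e^{2πi/N}, and the quotient of the free group F_N defined by the relations: g_i = 1 if Σ_l Q_{il} ≠ 0, g_i g_j = 1 if Σ_l Q_{il}Q_{jl} ≠ 0, g_i g_j g_k = 1 if Σ_l Q_{il}Q_{jl}Q_{kl} ≠ 0, the resulting group is cyclic of order N, i.e., isomorphic to ℤ_N. -/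
/-!
With `ψ` the additive character `a ↦ ξ ^ a.val` of `ℤ/N`, each entry `Q j l` is `ψ (j * l) / √N`,
so a product of entries of the columns `i, j, …` is `ψ ((i + j + ⋯) * l)` up to a nonzero scalar.
Since `ψ` is primitive, the character sum over `l` vanishes unless `i + j + ⋯ = 0`. The relations
are therefore exactly the words `g i`, `g i g j`, `g i g j g k` with zero index sum, and these
present `ℤ/N`: `g 0 = 1` and `g i g (-i) = 1` turn `g i g j g (-(i + j)) = 1` into
`g i g j = g (i + j)`.
-/

open Complex

section ZeroSumRelations

variable (A : Type*) [AddGroup A]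

def zeroSumRelations : Set (FreeGroup A) :=
  {w | ∃ i, i = 0 ∧ w = FreeGroup.of i} ∪
  {w | ∃ i j, i + j = 0 ∧ w = FreeGroup.of i * FreeGroup.of j} ∪
  {w | ∃ i j k, i + j + k = 0 ∧ w = FreeGroup.of i * FreeGroup.of j * FreeGroup.of k}

variable {A}

lemma lift_ofAdd_eq_one_of_mem_zeroSumRelations :
    ∀ r ∈ zeroSumRelations A, FreeGroup.lift Multiplicative.ofAdd r = 1 := by
  rintro r ((⟨i, h, rfl⟩ | ⟨i, j, h, rfl⟩) | ⟨i, j, k, h, rfl⟩) <;>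
    simp only [map_mul, FreeGroup.lift_apply_of, ← ofAdd_add, h, ofAdd_zero]

lemma PresentedGroup.of_mul_of_zeroSumRelations (a b : A) :
    (PresentedGroup.of a : PresentedGroup (zeroSumRelations A)) * PresentedGroup.of b =
      PresentedGroup.of (a + b) := by
  have hpair : ∀ c : A,
      (PresentedGroup.of c : PresentedGroup (zeroSumRelations A)) * PresentedGroup.of (-c) = 1 :=
    fun c => PresentedGroup.one_of_mem (Or.inl (Or.inr ⟨c, -c, add_neg_cancel c, rfl⟩))
  have htriple : (PresentedGroup.of a : PresentedGroup (zeroSumRelations A)) *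
      PresentedGroup.of b * PresentedGroup.of (-(a + b)) = 1 :=
    PresentedGroup.one_of_mem (Or.inr ⟨a, b, -(a + b), add_neg_cancel (a + b), rfl⟩)
  rw [eq_inv_of_mul_eq_one_left htriple, eq_inv_of_mul_eq_one_left (hpair (a + b))]

def PresentedGroup.zeroSumRelationsEquiv :
    PresentedGroup (zeroSumRelations A) ≃* Multiplicative A :=
  let toMult := PresentedGroup.toGroup lift_ofAdd_eq_one_of_mem_zeroSumRelations
  let ofMult : Multiplicative A →* PresentedGroup (zeroSumRelations A) :=
    { toFun := fun x => PresentedGroup.of x.toAdd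
      map_one' := PresentedGroup.one_of_mem (Or.inl (Or.inl ⟨0, rfl, rfl⟩))
      map_mul' := fun x y => (PresentedGroup.of_mul_of_zeroSumRelations x.toAdd y.toAdd).symm }
  have toMult_of (a : A) : toMult (PresentedGroup.of a) = Multiplicative.ofAdd a :=
    PresentedGroup.toGroup.of _
  MonoidHom.toMulEquiv toMult ofMult
    (PresentedGroup.ext fun a => congrArg ofMult (toMult_of a))
    (MonoidHom.ext fun x => toMult_of x.toAdd)

end ZeroSumRelations

namespace AddChar

variable {R R' : Type*} [CommRing R] [Field R'] {ψ : AddChar R R'}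

lemma map_mul_div_mul_map_mul_div (s t : R') (a b x : R) :
    ψ (a * x) / s * (ψ (b * x) / t) = ψ ((a + b) * x) / (s * t) := by
  rw [div_mul_div_comm, ← map_add_eq_mul, add_mul]

lemma sum_mul_div_ne_zero_iff [Fintype R] [CharZero R'] (hψ : ψ.IsPrimitive) {s : R'}
    (hs : s ≠ 0) (b : R) : (∑ x, ψ (b * x) / s) ≠ 0 ↔ b = 0 := by
  classical
  simp_rw [← Finset.sum_div, mul_comm b, sum_mulShift b hψ]
  split_ifs with hb <;> simp [hb, hs]

end AddChar

/-- For the rescaled Fourier matrix `Q j k = ξ^{jk}/√N`, `ξ = e^{2πi/N}`,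
the quotient of the free group on generators `g i`, `i ∈ ℤ/N`, by the relations
`g i = 1` when `Σ_l Q i l ≠ 0`, `g i g j = 1` when `Σ_l Q i l * Q j l ≠ 0`, and
`g i g j g k = 1` when `Σ_l Q i l * Q j l * Q k l ≠ 0`, is cyclic of order `N`:
it is isomorphic to `ℤ_N`. -/
theorem stmt16 (N : ℕ) [NeZero N] (ξ : ℂ) (hξ : ξ = Complex.exp (2 * Real.pi * I / N))
    (Q : ZMod N → ZMod N → ℂ) (hQ : ∀ j k, Q j k = ξ ^ (j * k).val / Real.sqrt N)
    (rels : Set (FreeGroup (ZMod N)))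
    (hrels : rels =
      {w | ∃ i, (∑ l, Q i l) ≠ 0 ∧ w = FreeGroup.of i} ∪
      {w | ∃ i j, (∑ l, Q i l * Q j l) ≠ 0 ∧ w = FreeGroup.of i * FreeGroup.of j} ∪
      {w | ∃ i j k, (∑ l, Q i l * Q j l * Q k l) ≠ 0 ∧
        w = FreeGroup.of i * FreeGroup.of j * FreeGroup.of k}) :
    Nonempty (PresentedGroup rels ≃* Multiplicative (ZMod N)) := by
  have hprim : IsPrimitiveRoot ξ N := hξ ▸ Complex.isPrimitiveRoot_exp N (NeZero.ne N)
  set ψ := AddChar.zmodChar N hprim.pow_eq_one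
  have hψ : ψ.IsPrimitive := AddChar.zmodChar_primitive_of_primitive_root N hprim
  have hQψ : Q = fun j k => ψ (j * k) / (Real.sqrt N : ℂ) := funext₂ hQ
  have hs : (Real.sqrt N : ℂ) ≠ 0 := by
    exact_mod_cast Real.sqrt_ne_zero'.mpr (Nat.cast_pos.mpr (NeZero.pos N))
  have hrels' : rels = zeroSumRelations (ZMod N) := by
    simp only [hrels, hQψ, AddChar.map_mul_div_mul_map_mul_div, zeroSumRelations,
      AddChar.sum_mul_div_ne_zero_iff hψ hs,
      AddChar.sum_mul_div_ne_zero_iff hψ (mul_ne_zero hs hs),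
      AddChar.sum_mul_div_ne_zero_iff hψ (mul_ne_zero (mul_ne_zero hs hs) hs)]
  exact hrels' ▸ ⟨PresentedGroup.zeroSumRelationsEquiv⟩
end
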